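/- Let v ∈ S_n avoid 1324 and suppose Γ([v,w₀]) is a Young diagram λ (in English notation). Then the complement μ = n^n/λ has exactly ℓ(v) boxes; explicitly, the map sending an inversion ⟨a,b⟩ of v to the box in row b and column v(a) is a bijection between inversions of v and boxes of μ. -/

import Mathlib

/-
A permutation `u ≥ v` with `u i = c` forces, through the rank conditions, some `k ≤ i` with
`v k ≤ c` and some `k ≥ i` with `c ≤ v k`; conversely, when `v i < c` the second condition
suffices, since one can reach such a `u` from `v` by one or two transpositions that increase
the length. As the rows of `λ` are left-justified and contain the graph of `v`, a box `(r, c)`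
outside `λ` has `v r < c` and no `k ≥ r` with `c ≤ v k`, so `(v⁻¹ c, r)` is an inversion
sent to it. If instead an inversion `(a, b)` were sent to a box `(b, v a)` of `λ`, the
witnesses `k > b` with `v k > v a` and `p < a` with `v p < v b` (the latter coming from the
box `(a, v b)` of `λ`) would form the pattern `p a b k` of type 1324.
-/

open Equiv Finset
open scoped Classical

/-- Bruhat order on the symmetric group on `Fin n`, via the rank-matrix
characterization: `v ≤ w` iff every northeast corner count of `v` is at most
that of `w`. -/
def bruhatLE {n : ℕ} (v w : Equiv.Perm (Fin n)) : Prop :=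
  ∀ i j : Fin n,
    (Finset.univ.filter fun k => k ≤ i ∧ j ≤ v k).card ≤
      (Finset.univ.filter fun k => k ≤ i ∧ j ≤ w k).card

/-- Coxeter length = number of inversions. -/
def len {n : ℕ} (v : Equiv.Perm (Fin n)) : ℕ :=
  (Finset.univ.filter fun p : Fin n × Fin n => p.1 < p.2 ∧ v p.2 < v p.1).card

/-- The graph of the Bruhat interval `[v, w]`. -/
def grInt {n : ℕ} (v w : Equiv.Perm (Fin n)) : Set (Fin n × Fin n) :=
  {p | ∃ u : Equiv.Perm (Fin n), bruhatLE v u ∧ bruhatLE u w ∧ u p.1 = p.2}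

def avoids1324 {n : ℕ} (v : Equiv.Perm (Fin n)) : Prop :=
  ¬ ∃ a b c d : Fin n, a < b ∧ b < c ∧ c < d ∧ v a < v c ∧ v c < v b ∧ v b < v d

section Bruhat

variable {n : ℕ}

lemma bruhatLE_refl (v : Perm (Fin n)) : bruhatLE v v := fun _ _ => le_rfl

lemma bruhatLE_trans {u v w : Perm (Fin n)} (huv : bruhatLE u v) (hvw : bruhatLE v w) :
    bruhatLE u w := fun i j => (huv i j).trans (hvw i j)

lemma card_filter_le_apply_eq (v u : Perm (Fin n)) (c : Fin n) :
    (univ.filter fun k => c ≤ v k).card = (univ.filter fun k => c ≤ u k).card :=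
  card_equiv (v.trans u.symm) (by simp)

lemma bruhatLE_revPerm (u : Perm (Fin n)) : bruhatLE u Fin.revPerm := by
  intro i j
  rcases le_total i j.rev with hij | hji
  · refine card_le_card ?_
    intro k hk
    simp only [mem_filter, mem_univ, true_and, Fin.revPerm_apply] at hk ⊢
    exact ⟨hk.1, Fin.le_rev_iff.mp (hk.1.trans hij)⟩
  · calc (univ.filter fun k => k ≤ i ∧ j ≤ u k).card
        ≤ (univ.filter fun k => j ≤ u k).card := card_le_card <| by
          intro k hk; simp only [mem_filter, mem_univ, true_and] at hk ⊢; exact hk.2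
      _ = (univ.filter fun k => j ≤ Fin.revPerm k).card := card_filter_le_apply_eq _ _ _
      _ = (univ.filter fun k => k ≤ i ∧ j ≤ Fin.revPerm k).card := by
        refine congrArg card (filter_congr fun k _ => ?_)
        simp only [Fin.revPerm_apply, iff_and_self]
        exact fun h => (Fin.le_rev_iff.mp h).trans hji

lemma bruhatLE_mul_swap (v : Perm (Fin n)) {a b : Fin n} (hab : a < b) (hv : v a < v b) :
    bruhatLE v (v * swap a b) := by
  intro i j
  by_cases hbi : b ≤ i
  · refine card_le_card_of_injOn (swap a b) ?_ (swap a b).injective.injOn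
    intro k hk
    simp only [mem_coe, mem_filter, mem_univ, true_and] at hk ⊢
    refine ⟨?_, by rw [Perm.mul_apply, swap_apply_self]; exact hk.2⟩
    rcases eq_or_ne k a with rfl | hka
    · rwa [swap_apply_left]
    rcases eq_or_ne k b with rfl | hkb
    · rw [swap_apply_right]; exact hab.le.trans hbi
    · rw [swap_apply_of_ne_of_ne hka hkb]; exact hk.1
  · refine card_le_card ?_
    intro k hk
    simp only [mem_filter, mem_univ, true_and] at hk ⊢
    rw [Perm.mul_apply]
    have hkb : k ≠ b := fun h => hbi (h ▸ hk.1)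
    refine ⟨hk.1, ?_⟩
    rcases eq_or_ne k a with rfl | hka
    · rw [swap_apply_left]; exact hk.2.trans hv.le
    · rw [swap_apply_of_ne_of_ne hka hkb]; exact hk.2

lemma bruhatLE.card_filter_lt_le {v u : Perm (Fin n)} (h : bruhatLE v u) (i j : Fin n) :
    (univ.filter fun k => k < i ∧ j ≤ v k).card ≤
      (univ.filter fun k => k < i ∧ j ≤ u k).card := by
  rcases Nat.eq_zero_or_pos i with hi | hi
  · simp [Fin.lt_def, hi]
  · have hpred : ∀ k : Fin n, k < i ↔ k ≤ ⟨i - 1, by omega⟩ := fun k => by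
      simp only [Fin.lt_def, Fin.le_def]; omega
    simpa only [hpred] using h _ j

lemma bruhatLE.exists_le_apply_le {v u : Perm (Fin n)} (h : bruhatLE v u) (i : Fin n) :
    ∃ k ≤ i, v k ≤ u i := by
  by_contra! hcon
  have hlt : (u i : ℕ) + 1 < n := lt_of_le_of_lt (hcon i le_rfl) (v i).isLt
  set j : Fin n := ⟨u i + 1, hlt⟩
  have hv : (univ.filter fun k => k ≤ i ∧ j ≤ v k) = Iic i := by
    ext k
    simp only [mem_filter, mem_univ, true_and, mem_Iic, and_iff_left_iff_imp]
    exact fun hk => Fin.le_def.mpr (hcon k hk)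
  have hu : (univ.filter fun k => k ≤ i ∧ j ≤ u k) ⊂ Iic i := by
    refine (ssubset_iff_of_subset ?_).mpr ⟨i, mem_Iic.mpr le_rfl, ?_⟩
    · intro k hk
      exact mem_Iic.mpr (mem_filter.mp hk).2.1
    · exact fun hi => Nat.not_succ_le_self _ (Fin.le_def.mp (mem_filter.mp hi).2.2)
  exact (h i j).not_gt (hv ▸ card_lt_card hu)

lemma bruhatLE.exists_ge_apply_ge {v u : Perm (Fin n)} (h : bruhatLE v u) (i : Fin n) :
    ∃ k, i ≤ k ∧ u i ≤ v k := by
  by_contra! hcon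
  have hv : (univ.filter fun k => k < i ∧ u i ≤ v k) = univ.filter fun k => u i ≤ v k :=
    filter_congr fun k _ => and_iff_right_of_imp fun hk =>
      lt_of_not_ge fun hik => (hcon k hik).not_ge hk
  have hu : (univ.filter fun k => k < i ∧ u i ≤ u k) ⊂ univ.filter fun k => u i ≤ u k := by
    refine (ssubset_iff_of_subset ?_).mpr ⟨i, by simp, by simp⟩
    intro k hk
    simp only [mem_filter, mem_univ, true_and] at hk ⊢
    exact hk.2
  have hcard := h.card_filter_lt_le i (u i)
  rw [hv, card_filter_le_apply_eq v u] at hcard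
  exact hcard.not_gt (card_lt_card hu)

lemma exists_bruhatLE_apply_eq_of_lt {v : Perm (Fin n)} {i c : Fin n} (hvc : v i < c)
    (hc : ∃ k, i ≤ k ∧ c ≤ v k) : ∃ u, bruhatLE v u ∧ u i = c := by
  have hvj : v (v.symm c) = c := v.apply_symm_apply c
  have hji : v.symm c ≠ i := fun h => hvc.ne (h ▸ hvj)
  rcases lt_or_gt_of_ne hji with hj | hj
  · obtain ⟨k, hik, hck⟩ := hc
    have hik' : i < k := lt_of_le_of_ne hik fun h => (h ▸ hck).not_gt hvc
    have hjk : v.symm c ≠ k := (hj.trans hik').ne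
    have hck' : c < v k := lt_of_le_of_ne hck fun h => hjk (v.injective (by rw [hvj, h]))
    -- first move `v k` to position `i`, then swap it with `c`, now at position `v⁻¹ c < i`
    refine ⟨v * swap i k * swap (v.symm c) i,
      bruhatLE_trans (bruhatLE_mul_swap v hik' (hvc.trans hck')) (bruhatLE_mul_swap _ hj ?_), ?_⟩
    · simpa [swap_apply_of_ne_of_ne hji hjk] using hck'
    · simp [swap_apply_of_ne_of_ne hji hjk]
  · exact ⟨v * swap i (v.symm c), bruhatLE_mul_swap v hj (by rwa [hvj]), by simp⟩

end Bruhat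

def RowsLeftClosed {α β : Type*} [LE β] (S : Set (α × β)) : Prop :=
  ∀ r c c', c' ≤ c → (r, c) ∈ S → (r, c') ∈ S

section Graph

variable {n : ℕ}

lemma apply_mem_grInt_revPerm (v : Perm (Fin n)) (k : Fin n) :
    (k, v k) ∈ grInt v Fin.revPerm :=
  ⟨v, bruhatLE_refl v, bruhatLE_revPerm v, rfl⟩

lemma exists_le_of_mem_grInt {v w : Perm (Fin n)} {i c : Fin n} (h : (i, c) ∈ grInt v w) :
    ∃ k ≤ i, v k ≤ c := by
  obtain ⟨u, hvu, -, hu : u i = c⟩ := h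
  exact hu ▸ hvu.exists_le_apply_le i

lemma exists_ge_of_mem_grInt {v w : Perm (Fin n)} {i c : Fin n} (h : (i, c) ∈ grInt v w) :
    ∃ k, i ≤ k ∧ c ≤ v k := by
  obtain ⟨u, hvu, -, hu : u i = c⟩ := h
  exact hu ▸ hvu.exists_ge_apply_ge i

lemma mem_grInt_revPerm_of_lt {v : Perm (Fin n)} {i c : Fin n} (hvc : v i < c)
    (hc : ∃ k, i ≤ k ∧ c ≤ v k) : (i, c) ∈ grInt v Fin.revPerm := by
  obtain ⟨u, hvu, hu⟩ := exists_bruhatLE_apply_eq_of_lt hvc hc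
  exact ⟨u, hvu, bruhatLE_revPerm u, hu⟩

variable {v : Perm (Fin n)}

lemma isInversion_of_notMem_grInt_revPerm (hrow : RowsLeftClosed (grInt v Fin.revPerm))
    {r c : Fin n} (h : (r, c) ∉ grInt v Fin.revPerm) : v.symm c < r ∧ v r < c := by
  have hvr : v r < c :=
    lt_of_not_ge fun hc => h (hrow r (v r) c hc (apply_mem_grInt_revPerm v r))
  refine ⟨lt_of_not_ge fun hr => h (mem_grInt_revPerm_of_lt hvr ⟨v.symm c, hr, ?_⟩), hvr⟩
  simp

lemma notMem_grInt_revPerm_of_isInversion (hrow : RowsLeftClosed (grInt v Fin.revPerm))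
    (h1324 : avoids1324 v) {a b : Fin n} (hab : a < b) (hv : v b < v a) :
    (b, v a) ∉ grInt v Fin.revPerm := by
  intro hmem
  obtain ⟨k, hbk, hak⟩ := exists_ge_of_mem_grInt hmem
  have hbk' : b < k := lt_of_le_of_ne hbk fun h => (h ▸ hak).not_gt hv
  have hak' : v a < v k := lt_of_le_of_ne hak fun h => (hab.trans hbk').ne (v.injective h)
  obtain ⟨p, hpa, hpb⟩ :=
    exists_le_of_mem_grInt (hrow a (v a) (v b) hv.le (apply_mem_grInt_revPerm v a))
  have hpa' : p < a := lt_of_le_of_ne hpa fun h => (h ▸ hpb).not_gt hv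
  have hpb' : v p < v b := lt_of_le_of_ne hpb fun h => (hpa'.trans hab).ne (v.injective h)
  exact h1324 ⟨p, a, b, k, hpa', hab, hbk', hpb', hv, hak'⟩

lemma bijOn_inversions_compl_grInt_revPerm (hrow : RowsLeftClosed (grInt v Fin.revPerm))
    (h1324 : avoids1324 v) :
    Set.BijOn (fun p : Fin n × Fin n => (p.2, v p.1))
      {p : Fin n × Fin n | p.1 < p.2 ∧ v p.2 < v p.1}
      {q : Fin n × Fin n | q ∉ grInt v Fin.revPerm} := by
  refine ⟨fun p hp => notMem_grInt_revPerm_of_isInversion hrow h1324 hp.1 hp.2, ?_, ?_⟩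
  · intro p _ q _ hpq
    simp only [Prod.mk.injEq] at hpq
    exact Prod.ext (v.injective hpq.2) hpq.1
  · rintro ⟨r, c⟩ hrc
    obtain ⟨hcr, hvr⟩ := isInversion_of_notMem_grInt_revPerm hrow hrc
    exact ⟨(v.symm c, r), ⟨hcr, by simpa using hvr⟩, by simp⟩

end Graph

theorem complement_boxes_eq_inversions_general {n : ℕ} (v : Equiv.Perm (Fin n))
    (h1 : avoids1324 v) (lam : Fin n → ℕ)
    (hgr : ∀ p : Fin n × Fin n,
      p ∈ grInt v Fin.revPerm ↔ (p.2 : ℕ) < lam p.1) :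
    Set.BijOn (fun p : Fin n × Fin n => (p.2, v p.1))
        {p : Fin n × Fin n | p.1 < p.2 ∧ v p.2 < v p.1}
        {q : Fin n × Fin n | q ∉ grInt v Fin.revPerm} ∧
      (Finset.univ.filter
        fun q : Fin n × Fin n => q ∉ grInt v Fin.revPerm).card = len v := by
  have hrow : RowsLeftClosed (grInt v Fin.revPerm) := fun r c c' hc h =>
    (hgr _).mpr ((Fin.le_def.mp hc).trans_lt ((hgr _).mp h))
  have hbij := bijOn_inversions_compl_grInt_revPerm hrow h1
  refine ⟨hbij, (Set.BijOn.finsetCard_eq (fun p : Fin n × Fin n => (p.2, v p.1)) ?_).symm⟩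
  simpa only [coe_filter, mem_univ, true_and] using hbij

/-- When `v` avoids 1324 and `Γ([v, w₀])` is a Young diagram `λ`, the map
sending an inversion `⟨a, b⟩` of `v` to the box in row `b`, column `v(a)` is a
bijection onto the complement `μ = n^n/λ`; in particular `|μ| = ℓ(v)`. -/
theorem complement_boxes_eq_inversions {n : ℕ} (v : Equiv.Perm (Fin n))
    (h1 : avoids1324 v) (lam : Fin n → ℕ) (hanti : Antitone lam)
    (hgr : ∀ p : Fin n × Fin n,
      p ∈ grInt v Fin.revPerm ↔ (p.2 : ℕ) < lam p.1) :
    Set.BijOn (fun p : Fin n × Fin n => (p.2, v p.1))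
        {p : Fin n × Fin n | p.1 < p.2 ∧ v p.2 < v p.1}
        {q : Fin n × Fin n | q ∉ grInt v Fin.revPerm} ∧
      (Finset.univ.filter
        fun q : Fin n × Fin n => q ∉ grInt v Fin.revPerm).card = len v :=
  complement_boxes_eq_inversions_general v h1 lam hgr
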